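/- arXiv:2207.08040 — 3 statements merged into one kernel-verified Lean document; each statement's English description precedes it below -/
import Mathlib

section
/- Pointwise contraction bound for the policy-evaluation operator: for all bounded measurable J, J' : S × A → ℝ and every (s,a), if R(s) = true then T_π J (s,a) = T_π J' (s,a), and if R(s) = false then |T_π J (s,a) − T_π J' (s,a)| ≤ (1 − h(s,a)) · ‖J − J'‖∞. -/
open MeasureTheory ProbabilityTheory Filter

/-- Sup norm of a function on state-action pairs. -/
noncomputable def supNorm {S A : Type*} (J : S × A → ℝ) : ℝ := ⨆ sa, |J sa|

/-- Policy-evaluation operator `T_π`. -/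
noncomputable def Tpol {S A : Type*} [MeasurableSpace S] [MeasurableSpace A]
    (p : ProbabilityTheory.Kernel (S × A) S) (pol : ProbabilityTheory.Kernel S A)
    (R : S → Bool) (h : S × A → ℝ) (J : S × A → ℝ) : S × A → ℝ :=
  fun sa => if R sa.1 = true then 1
    else (1 - h sa) * ∫ s', (∫ a', J (s', a') ∂(pol s')) ∂(p sa)

/-- Bellman optimality operator `T`. -/
noncomputable def Topt {S A : Type*} [MeasurableSpace S] [MeasurableSpace A]
    [Fintype A] [Nonempty A]
    (p : ProbabilityTheory.Kernel (S × A) S)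
    (R : S → Bool) (h : S × A → ℝ) (J : S × A → ℝ) : S × A → ℝ :=
  fun sa => if R sa.1 = true then 1
    else (1 - h sa) * ∫ s', (Finset.univ.sup' Finset.univ_nonempty fun a' => J (s', a')) ∂(p sa)

theorem stmt_2
    {S A : Type*} [MeasurableSpace S] [MeasurableSpace A]
    [Fintype A] [Nonempty A] [MeasurableSingletonClass A]
    (p : ProbabilityTheory.Kernel (S × A) S) [IsMarkovKernel p]
    (pol : ProbabilityTheory.Kernel S A) [IsMarkovKernel pol]
    (R : S → Bool) (hR : Measurable R)
    (h : S × A → ℝ) (hh : Measurable h) (hh01 : ∀ sa, 0 ≤ h sa ∧ h sa ≤ 1)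
    (δ : ℝ) (hδ0 : 0 < δ) (hδ1 : δ ≤ 1) (hhaz : ∀ sa, R sa.1 = false → δ ≤ h sa)
    (J J' : S × A → ℝ) (hJm : Measurable J) (hJb : ∃ C, ∀ sa, |J sa| ≤ C)
    (hJ'm : Measurable J') (hJ'b : ∃ C, ∀ sa, |J' sa| ≤ C) :
    ∀ sa : S × A,
      (R sa.1 = true → Tpol p pol R h J sa = Tpol p pol R h J' sa) ∧
      (R sa.1 = false →
        |Tpol p pol R h J sa - Tpol p pol R h J' sa| ≤ (1 - h sa) * supNorm (J - J')) := by

  intro sa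
  obtain ⟨C1, hC1⟩ := hJb
  obtain ⟨C2, hC2⟩ := hJ'b
  have hbdd : BddAbove (Set.range fun x => |(J - J') x|) := by
    refine ⟨C1 + C2, ?_⟩
    rintro _ ⟨x, rfl⟩
    calc |(J - J') x| = |J x - J' x| := rfl
      _ ≤ |J x| + |J' x| := abs_sub _ _
      _ ≤ C1 + C2 := add_le_add (hC1 x) (hC2 x)
  have hle : ∀ x, |J x - J' x| ≤ supNorm (J - J') := fun x => le_ciSup hbdd x
  have hC0 : 0 ≤ supNorm (J - J') := le_trans (abs_nonneg _) (hle sa)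
  -- measurability of inner integral
  have hGm : ∀ (K : S × A → ℝ), Measurable K →
      Measurable (fun s' => ∫ a', K (s', a') ∂(pol s')) := by
    intro K hK
    have heq : (fun s' => ∫ a', K (s', a') ∂(pol s'))
        = fun s' => ∑ a : A, (pol s' {a}).toReal • K (s', a) := by
      funext s'
      exact integral_fintype .of_finite
    rw [heq]
    apply Finset.measurable_sum
    intro a _
    exact ((pol.measurable_coe (measurableSet_singleton a)).ennreal_toReal).smul
      (hK.comp (measurable_id.prodMk measurable_const))
  -- integrability over p sa
  have hGint : ∀ (K : S × A → ℝ) (hK : Measurable K) (CK : ℝ) (hCK : ∀ x, |K x| ≤ CK),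
      Integrable (fun s' => ∫ a', K (s', a') ∂(pol s')) (p sa) := by
    intro K hK CK hCK
    refine (integrable_const CK).mono' ((hGm K hK).aestronglyMeasurable) ?_
    filter_upwards with s'
    rw [Real.norm_eq_abs]
    calc |∫ a', K (s', a') ∂(pol s')| = ‖∫ a', K (s', a') ∂(pol s')‖ := rfl
      _ ≤ CK * ((pol s') Set.univ).toReal :=
          norm_integral_le_of_norm_le_const (by
            filter_upwards with a'; rw [Real.norm_eq_abs]; exact hCK _)
      _ = CK := by simp
  constructor
  · intro ht; simp [Tpol, ht]
  · intro hf
    have h1 : 0 ≤ 1 - h sa := by linarith [(hh01 sa).2]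
    simp only [Tpol, hf, Bool.false_eq_true, if_false]
    rw [← mul_sub, abs_mul, abs_of_nonneg h1]
    refine mul_le_mul_of_nonneg_left ?_ h1
    rw [← integral_sub (hGint J hJm C1 hC1) (hGint J' hJ'm C2 hC2)]
    calc |∫ s', (∫ a', J (s', a') ∂(pol s')) - ∫ a', J' (s', a') ∂(pol s') ∂(p sa)|
        = ‖∫ s', (∫ a', J (s', a') ∂(pol s')) - ∫ a', J' (s', a') ∂(pol s') ∂(p sa)‖ := rfl
      _ ≤ supNorm (J - J') * ((p sa) Set.univ).toReal := by
          refine norm_integral_le_of_norm_le_const ?_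
          filter_upwards with s'
          rw [Real.norm_eq_abs,
            ← integral_sub (Integrable.of_finite) (Integrable.of_finite)]
          calc |∫ a', J (s', a') - J' (s', a') ∂(pol s')|
              = ‖∫ a', J (s', a') - J' (s', a') ∂(pol s')‖ := rfl
            _ ≤ supNorm (J - J') * ((pol s') Set.univ).toReal :=
                norm_integral_le_of_norm_le_const (by
                  filter_upwards with a'; rw [Real.norm_eq_abs]; exact hle _)
            _ = supNorm (J - J') := by simp
      _ = supNorm (J - J') := by simp
end

section
/- (Theorem 1, optimality part.) The operator T is a contraction in the sup norm with modulus γ: for all bounded measurable J, J' : S × A → ℝ, ‖T J − T J'‖∞ ≤ γ · ‖J − J'‖∞. -/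
open MeasureTheory ProbabilityTheory Filter

theorem stmt_5
    {S A : Type*} [MeasurableSpace S] [MeasurableSpace A]
    [Fintype A] [Nonempty A] [MeasurableSingletonClass A]
    (p : ProbabilityTheory.Kernel (S × A) S) [IsMarkovKernel p]
    (R : S → Bool) (hR : Measurable R)
    (h : S × A → ℝ) (hh : Measurable h) (hh01 : ∀ sa, 0 ≤ h sa ∧ h sa ≤ 1)
    (δ : ℝ) (hδ0 : 0 < δ) (hδ1 : δ ≤ 1) (hhaz : ∀ sa, R sa.1 = false → δ ≤ h sa)
    (γ : ℝ) (hγ : γ = 1 - δ)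
    (J J' : S × A → ℝ) (hJm : Measurable J) (hJb : ∃ C, ∀ sa, |J sa| ≤ C)
    (hJ'm : Measurable J') (hJ'b : ∃ C, ∀ sa, |J' sa| ≤ C) :
    supNorm (Topt p R h J - Topt p R h J') ≤ γ * supNorm (J - J') := by
  obtain ⟨C, hC⟩ := hJb
  obtain ⟨C', hC'⟩ := hJ'b
  set K := supNorm (J - J') with hKdef
  have hbdd : BddAbove (Set.range fun sa => |(J - J') sa|) := by
    refine ⟨C + C', ?_⟩
    rintro x ⟨sa, rfl⟩
    simp only [Pi.sub_apply]
    exact (abs_sub _ _).trans (add_le_add (hC sa) (hC' sa))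
  have hKle : ∀ sa, |J sa - J' sa| ≤ K := by
    intro sa
    have := le_ciSup hbdd sa
    exact this
  have hK0 : 0 ≤ K := Real.iSup_nonneg fun sa => abs_nonneg _
  have hγ0 : 0 ≤ γ := by rw [hγ]; linarith
  refine Real.iSup_le (fun sa => ?_) (mul_nonneg hγ0 hK0)
  simp only [Pi.sub_apply, Topt]
  cases hRsa : R sa.1 with
  | true =>
    simp only [hRsa, if_true, sub_self, abs_zero]
    exact mul_nonneg hγ0 hK0
  | false =>
    simp only [hRsa, Bool.false_eq_true, if_false]
    set M : S → ℝ := fun s' => Finset.univ.sup' Finset.univ_nonempty fun a' => J (s', a')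
      with hMdef
    set M' : S → ℝ := fun s' => Finset.univ.sup' Finset.univ_nonempty fun a' => J' (s', a')
      with hM'def
    have hC0 : 0 ≤ C := (abs_nonneg _).trans (hC sa)
    have hC'0 : 0 ≤ C' := (abs_nonneg _).trans (hC' sa)
    have hMbd : ∀ s', |M s'| ≤ C := by
      intro s'
      rw [abs_le]
      constructor
      · have := Finset.le_sup' (fun a' => J (s', a')) (Finset.mem_univ (Classical.arbitrary A))
        have h2 := abs_le.1 (hC (s', Classical.arbitrary A))
        exact le_trans h2.1 this
      · exact Finset.sup'_le _ _ fun a _ => (abs_le.1 (hC (s', a))).2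
    have hM'bd : ∀ s', |M' s'| ≤ C' := by
      intro s'
      rw [abs_le]
      constructor
      · have := Finset.le_sup' (fun a' => J' (s', a')) (Finset.mem_univ (Classical.arbitrary A))
        have h2 := abs_le.1 (hC' (s', Classical.arbitrary A))
        exact le_trans h2.1 this
      · exact Finset.sup'_le _ _ fun a _ => (abs_le.1 (hC' (s', a))).2
    have hMm : Measurable M := by
      have hEq : M = Finset.univ.sup' Finset.univ_nonempty (fun a' s' => J (s', a')) := by
        funext s'; simp only [hMdef, Finset.sup'_apply]
      rw [hEq]
      exact Finset.measurable_sup' _ fun a _ =>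
        hJm.comp (measurable_id.prodMk measurable_const)
    have hM'm : Measurable M' := by
      have hEq : M' = Finset.univ.sup' Finset.univ_nonempty (fun a' s' => J' (s', a')) := by
        funext s'; simp only [hM'def, Finset.sup'_apply]
      rw [hEq]
      exact Finset.measurable_sup' _ fun a _ =>
        hJ'm.comp (measurable_id.prodMk measurable_const)
    have hMint : Integrable M (p sa) :=
      (integrable_const C).mono' hMm.aestronglyMeasurable
        (ae_of_all _ fun s' => by simpa [Real.norm_eq_abs] using hMbd s')
    have hM'int : Integrable M' (p sa) :=
      (integrable_const C').mono' hM'm.aestronglyMeasurable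
        (ae_of_all _ fun s' => by simpa [Real.norm_eq_abs] using hM'bd s')
    have hMM' : ∀ s', |M s' - M' s'| ≤ K := by
      intro s'
      rw [abs_sub_le_iff]
      constructor
      · rw [sub_le_iff_le_add]
        refine Finset.sup'_le _ _ fun a _ => ?_
        have h1 : J' (s', a) ≤ M' s' := by
          simp only [hM'def]
          exact Finset.le_sup' (fun a' => J' (s', a')) (Finset.mem_univ a)
        have h2 := (abs_le.1 (hKle (s', a))).2
        linarith
      · rw [sub_le_iff_le_add]
        refine Finset.sup'_le _ _ fun a _ => ?_
        have h1 : J (s', a) ≤ M s' := by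
          simp only [hMdef]
          exact Finset.le_sup' (fun a' => J (s', a')) (Finset.mem_univ a)
        have h2 := (abs_le.1 (hKle (s', a))).1
        linarith
    have hint : |∫ s', M s' ∂(p sa) - ∫ s', M' s' ∂(p sa)| ≤ K := by
      rw [← integral_sub hMint hM'int]
      have := norm_integral_le_of_norm_le_const (μ := p sa) (C := K)
        (f := fun s' => M s' - M' s')
        (ae_of_all _ fun s' => by simpa [Real.norm_eq_abs] using hMM' s')
      simpa [Real.norm_eq_abs, measure_univ] using this
    have hhs := hh01 sa
    have h1h : |1 - h sa| = 1 - h sa := abs_of_nonneg (by linarith [hhs.2])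
    calc |(1 - h sa) * ∫ s', M s' ∂(p sa) - (1 - h sa) * ∫ s', M' s' ∂(p sa)|
        = (1 - h sa) * |∫ s', M s' ∂(p sa) - ∫ s', M' s' ∂(p sa)| := by
          rw [← mul_sub, abs_mul, h1h]
      _ ≤ (1 - h sa) * K := by
          exact mul_le_mul_of_nonneg_left hint (by linarith [hhs.2])
      _ ≤ γ * K := mul_le_mul_of_nonneg_right (by have := hhaz sa hRsa; linarith) hK0
end

section
/- (Theorem 1, fixed point of T.) There exists a unique bounded measurable function J* : S × A → ℝ satisfying T J* = J*; that is, T has exactly one fixed point among bounded measurable functions. -/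
/-!
Outside the release set the Bellman operator scales the continuation value by `1 - h ≤ 1 - δ`,
and a maximum over finitely many actions is 1-Lipschitz for the sup distance, so `T` is a
`(1 - δ)`-contraction for the sup norm. Bounded measurable functions form a closed, hence
complete, subset of `ℓ^∞(S × A)`, which `T` maps to itself, so Banach's fixed point theorem
applies.
-/

open MeasureTheory ProbabilityTheory Filter

open scoped NNReal ENNReal

theorem Finset.abs_sup'_sub_sup'_le {ι α : Type*} [AddCommGroup α] [LinearOrder α]
    [IsOrderedAddMonoid α] {s : Finset ι} (hs : s.Nonempty) {f g : ι → α} {C : α}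
    (hfg : ∀ i ∈ s, |f i - g i| ≤ C) : |s.sup' hs f - s.sup' hs g| ≤ C := by
  rw [abs_sub_le_iff, sub_le_iff_le_add, sub_le_iff_le_add]
  constructor <;> refine Finset.sup'_le _ _ fun i hi => ?_
  · calc f i ≤ C + g i := sub_le_iff_le_add.1 (abs_sub_le_iff.1 (hfg i hi)).1
      _ ≤ C + s.sup' hs g := add_le_add_right (Finset.le_sup' g hi) C
  · calc g i ≤ C + f i := sub_le_iff_le_add.1 (abs_sub_le_iff.1 (hfg i hi)).2
      _ ≤ C + s.sup' hs f := add_le_add_right (Finset.le_sup' f hi) C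

section BoundedMeasurable

variable {α : Type*} [MeasurableSpace α]

def IsBoundedMeasurable (f : α → ℝ) : Prop := Measurable f ∧ ∃ C, ∀ x, |f x| ≤ C

theorem IsBoundedMeasurable.memℓp_infty {f : α → ℝ} (hf : IsBoundedMeasurable f) :
    Memℓp f ∞ := by
  obtain ⟨C, hC⟩ := hf.2
  refine _root_.memℓp_infty ⟨C, Set.forall_mem_range.2 fun x => ?_⟩
  simpa only [Real.norm_eq_abs] using hC x

theorem isBoundedMeasurable_lp {f : lp (fun _ : α => ℝ) ∞} (hf : Measurable (f : α → ℝ)) :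
    IsBoundedMeasurable (f : α → ℝ) :=
  ⟨hf, ‖f‖, fun x =>
    (Real.norm_eq_abs _).symm.trans_le (lp.norm_apply_le_norm ENNReal.top_ne_zero f x)⟩

theorem isClosed_setOf_measurable_lp :
    IsClosed {f : lp (fun _ : α => ℝ) ∞ | Measurable (f : α → ℝ)} :=
  IsSeqClosed.isClosed fun _ _ hf hfg =>
    measurable_of_tendsto_metrizable hf ((lp.uniformContinuous_coe.continuous.tendsto _).comp hfg)

theorem IsBoundedMeasurable.integrable {f : α → ℝ} (hf : IsBoundedMeasurable f) (μ : Measure α)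
    [IsFiniteMeasure μ] : Integrable f μ := by
  obtain ⟨hfm, C, hC⟩ := hf
  exact .of_bound hfm.aestronglyMeasurable C
    (ae_of_all _ fun x => (Real.norm_eq_abs _).trans_le (hC x))

theorem IsBoundedMeasurable.integral_kernel {β : Type*} [MeasurableSpace β] (κ : Kernel β α)
    [IsMarkovKernel κ] {f : α → ℝ} (hf : IsBoundedMeasurable f) :
    IsBoundedMeasurable fun b => ∫ x, f x ∂κ b := by
  obtain ⟨hfm, C, hC⟩ := hf
  refine ⟨hfm.stronglyMeasurable.integral_kernel.measurable, C, fun b => ?_⟩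
  simpa using norm_integral_le_of_norm_le_const (μ := κ b)
    (ae_of_all _ fun x => (Real.norm_eq_abs _).trans_le (hC x))

theorem IsBoundedMeasurable.existsUnique_fixedPoint (T : (α → ℝ) → α → ℝ) {K : ℝ≥0} (hK : K < 1)
    (hT : ∀ f, IsBoundedMeasurable f → IsBoundedMeasurable (T f))
    (hT_contr : ∀ f g, IsBoundedMeasurable f → IsBoundedMeasurable g →
      ∀ C, (∀ x, |f x - g x| ≤ C) → ∀ x, |T f x - T g x| ≤ K * C) :
    ∃! f, IsBoundedMeasurable f ∧ T f = f := by
  let M := {f : lp (fun _ : α => ℝ) ∞ // Measurable (f : α → ℝ)}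
  have : CompleteSpace M := isClosed_setOf_measurable_lp.completeSpace_coe
  have : Nonempty M := ⟨⟨0, measurable_zero⟩⟩
  let F : M → M := fun f =>
    ⟨⟨T f, (hT _ (isBoundedMeasurable_lp f.2)).memℓp_infty⟩, (hT _ (isBoundedMeasurable_lp f.2)).1⟩
  have hF : ContractingWith K F := by
    refine ⟨hK, LipschitzWith.of_dist_le_mul fun f g => ?_⟩
    rw [Subtype.dist_eq, Subtype.dist_eq, dist_eq_norm, dist_eq_norm]
    refine lp.norm_le_of_forall_le (by positivity) fun x => ?_
    refine hT_contr _ _ (isBoundedMeasurable_lp f.2) (isBoundedMeasurable_lp g.2) _ (fun y => ?_) x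
    exact lp.norm_apply_le_norm ENNReal.top_ne_zero (f.1 - g.1) y
  set f₀ := ContractingWith.fixedPoint F hF
  refine ⟨f₀.1, ⟨isBoundedMeasurable_lp f₀.2,
    congrArg (fun f : M => (f : α → ℝ)) hF.fixedPoint_isFixedPt⟩, ?_⟩
  rintro f ⟨hf, hTf⟩
  have hfix : Function.IsFixedPt F ⟨⟨f, hf.memℓp_infty⟩, hf.1⟩ := Subtype.ext (lp.ext hTf)
  exact congrArg (fun f : M => (f : α → ℝ)) (hF.fixedPoint_unique hfix)

end BoundedMeasurable

section StateValue

variable {S A : Type*} [Fintype A] [Nonempty A]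

def stateValue (J : S × A → ℝ) (s : S) : ℝ :=
  Finset.univ.sup' Finset.univ_nonempty fun a => J (s, a)

theorem abs_stateValue_sub_le {J₁ J₂ : S × A → ℝ} {C : ℝ} (hC : ∀ sa, |J₁ sa - J₂ sa| ≤ C)
    (s : S) : |stateValue J₁ s - stateValue J₂ s| ≤ C :=
  Finset.abs_sup'_sub_sup'_le _ fun a _ => hC (s, a)

theorem isBoundedMeasurable_stateValue [MeasurableSpace S] [MeasurableSpace A]
    {J : S × A → ℝ} (hJ : IsBoundedMeasurable J) : IsBoundedMeasurable (stateValue J) := by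
  obtain ⟨hJm, C, hC⟩ := hJ
  refine ⟨?_, C, fun s => ?_⟩
  · have : stateValue J = Finset.univ.sup' Finset.univ_nonempty fun a s => J (s, a) := by
      ext s
      simp [stateValue, Finset.sup'_apply]
    rw [this]
    exact Finset.measurable_sup' _ fun a _ => hJm.comp measurable_prodMk_right
  · simpa [stateValue] using abs_stateValue_sub_le (J₂ := 0) (by simpa using hC) s

end StateValue

section BellmanOperator

variable {S A : Type*} [MeasurableSpace S] [MeasurableSpace A] [Fintype A] [Nonempty A]
  (p : Kernel (S × A) S) [IsMarkovKernel p] {R : S → Bool} {h : S × A → ℝ}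

theorem isBoundedMeasurable_Topt (hR : Measurable R) (hh : Measurable h)
    (hh01 : ∀ sa, 0 ≤ h sa ∧ h sa ≤ 1) {J : S × A → ℝ} (hJ : IsBoundedMeasurable J) :
    IsBoundedMeasurable (Topt p R h J) := by
  obtain ⟨hVm, C, hC⟩ := (isBoundedMeasurable_stateValue hJ).integral_kernel p
  have hrel : MeasurableSet {sa : S × A | R sa.1 = true} :=
    (hR.comp measurable_fst) (measurableSet_singleton true)
  refine ⟨Measurable.ite hrel measurable_const ((measurable_const.sub hh).mul hVm), max 1 C,
    fun sa => ?_⟩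
  by_cases hr : R sa.1 = true
  · simp [Topt, hr]
  · have h1h : |1 - h sa| ≤ 1 := abs_le.2 ⟨by linarith [(hh01 sa).2], by linarith [(hh01 sa).1]⟩
    calc |Topt p R h J sa| = |1 - h sa| * |∫ s, stateValue J s ∂p sa| := by
          simp [Topt, hr, abs_mul, stateValue]
      _ ≤ 1 * C := mul_le_mul h1h (hC sa) (abs_nonneg _) zero_le_one
      _ ≤ max 1 C := (one_mul C).trans_le (le_max_right 1 C)

theorem abs_Topt_sub_Topt_le {γ : ℝ≥0} (hγ : ∀ sa, R sa.1 = false → 1 - h sa ≤ γ)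
    (hh1 : ∀ sa, h sa ≤ 1) {J₁ J₂ : S × A → ℝ} (hJ₁ : IsBoundedMeasurable J₁)
    (hJ₂ : IsBoundedMeasurable J₂) {C : ℝ} (hC : ∀ sa, |J₁ sa - J₂ sa| ≤ C) (sa : S × A) :
    |Topt p R h J₁ sa - Topt p R h J₂ sa| ≤ γ * C := by
  cases hr : R sa.1
  · have hV : |∫ s, (stateValue J₁ s - stateValue J₂ s) ∂p sa| ≤ C := by
      simpa using norm_integral_le_of_norm_le_const (μ := p sa)
        (ae_of_all _ fun s => (Real.norm_eq_abs _).trans_le (abs_stateValue_sub_le hC s))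
    calc |Topt p R h J₁ sa - Topt p R h J₂ sa|
        = (1 - h sa) * |∫ s, (stateValue J₁ s - stateValue J₂ s) ∂p sa| := by
          rw [integral_sub ((isBoundedMeasurable_stateValue hJ₁).integrable _)
            ((isBoundedMeasurable_stateValue hJ₂).integrable _),
            ← abs_of_nonneg (sub_nonneg.2 (hh1 sa)), ← abs_mul, mul_sub]
          simp [Topt, hr, stateValue]
      _ ≤ γ * C := mul_le_mul (hγ sa hr) hV (abs_nonneg _) γ.2
  · simpa [Topt, hr] using mul_nonneg γ.2 ((abs_nonneg _).trans (hC sa))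

end BellmanOperator

theorem stmt_7_general
    {S A : Type*} [MeasurableSpace S] [MeasurableSpace A]
    [Fintype A] [Nonempty A]
    (p : ProbabilityTheory.Kernel (S × A) S) [IsMarkovKernel p]
    (R : S → Bool) (hR : Measurable R)
    (h : S × A → ℝ) (hh : Measurable h) (hh01 : ∀ sa, 0 ≤ h sa ∧ h sa ≤ 1)
    (δ : ℝ) (hδ0 : 0 < δ) (hhaz : ∀ sa, R sa.1 = false → δ ≤ h sa) :
    ∃! Jstar : S × A → ℝ,
      (Measurable Jstar ∧ (∃ C, ∀ sa, |Jstar sa| ≤ C)) ∧ Topt p R h Jstar = Jstar := by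
  have hγ : ∀ sa, R sa.1 = false → 1 - h sa ≤ (1 - δ).toNNReal := fun sa hsa =>
    (sub_le_sub_left (hhaz sa hsa) 1).trans (Real.le_coe_toNNReal _)
  exact IsBoundedMeasurable.existsUnique_fixedPoint (Topt p R h)
    (Real.toNNReal_lt_one.2 (sub_lt_self 1 hδ0))
    (fun J hJ => isBoundedMeasurable_Topt p hR hh hh01 hJ)
    (fun J₁ J₂ hJ₁ hJ₂ C hC => abs_Topt_sub_Topt_le p hγ (fun sa => (hh01 sa).2) hJ₁ hJ₂ hC)

theorem stmt_7
    {S A : Type*} [MeasurableSpace S] [MeasurableSpace A]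
    [Fintype A] [Nonempty A] [MeasurableSingletonClass A]
    (p : ProbabilityTheory.Kernel (S × A) S) [IsMarkovKernel p]
    (R : S → Bool) (hR : Measurable R)
    (h : S × A → ℝ) (hh : Measurable h) (hh01 : ∀ sa, 0 ≤ h sa ∧ h sa ≤ 1)
    (δ : ℝ) (hδ0 : 0 < δ) (hδ1 : δ ≤ 1) (hhaz : ∀ sa, R sa.1 = false → δ ≤ h sa) :
    ∃! Jstar : S × A → ℝ,
      (Measurable Jstar ∧ (∃ C, ∀ sa, |Jstar sa| ≤ C)) ∧ Topt p R h Jstar = Jstar :=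
  stmt_7_general p R hR h hh hh01 δ hδ0 hhaz
end
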